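/- Let σ(x) = 1/(1+e^{-x}) be the sigmoid function, let α ∈ ℝ, let τ > 0, and let U be uniformly distributed on (0,1). Define G(α,τ) = σ((α + log U − log(1−U))/τ). Then for every ε ∈ (0,1/2), σ(α) − (τ/4)·log(1/ε) ≤ P(G(α,τ) ≥ 1−ε) ≤ σ(α). -/

import Mathlib

open MeasureTheory Real

/-- The sigmoid function σ(x) = 1/(1+e^{-x}). -/
noncomputable def sigmoid (x : ℝ) : ℝ := 1 / (1 + Real.exp (-x))

/-!
The event `G(α, τ) ≥ p` is the event `U ≥ σ(τ · logit p − α)`, where `logit p = log (p / (1 - p))`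
inverts `σ` on `(0, 1)`; so for `p = 1 - ε` its probability is exactly `σ(α − τ · logit (1 − ε))`.
For `ε < 1/2` we have `0 ≤ logit (1 − ε) ≤ log (1/ε)`, and `σ` is increasing with `σ' = σ(1 − σ) ≤ 1/4`.
-/

open Set

theorem sigmoid_eq_real_sigmoid : _root_.sigmoid = Real.sigmoid := by
  ext x
  rw [_root_.sigmoid, Real.sigmoid_def, one_div]

theorem Real.sigmoid_sub_sigmoid_le {a b : ℝ} (h : b ≤ a) :
    Real.sigmoid a - Real.sigmoid b ≤ 4⁻¹ * (a - b) :=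
  image_sub_le_mul_sub_of_deriv_le differentiable_sigmoid
    (fun x => by rw [deriv_sigmoid]; nlinarith [sq_nonneg (2 * Real.sigmoid x - 1)]) h

noncomputable def logit (p : ℝ) : ℝ := log (p / (1 - p))

theorem sigmoid_logit {p : ℝ} (hp : p ∈ Ioo 0 1) : Real.sigmoid (logit p) = p := by
  obtain ⟨hp0, hp1⟩ := hp
  have hq : 0 < 1 - p := sub_pos.2 hp1
  rw [Real.sigmoid_def, logit, ← log_inv, exp_log (by positivity), inv_div]
  field_simp
  ring

theorem le_sigmoid_iff_logit_le {p x : ℝ} (hp : p ∈ Ioo 0 1) :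
    p ≤ Real.sigmoid x ↔ logit p ≤ x := by
  rw [← Real.sigmoid_le_iff (a := logit p), sigmoid_logit hp]

theorem sigmoid_le_iff_le_logit {p x : ℝ} (hp : p ∈ Ioo 0 1) :
    Real.sigmoid x ≤ p ↔ x ≤ logit p := by
  rw [← Real.sigmoid_le_iff (b := logit p), sigmoid_logit hp]

theorem logit_eq_log_sub_log {p : ℝ} (hp : p ∈ Ioo 0 1) : logit p = log p - log (1 - p) :=
  log_div hp.1.ne' (sub_pos.2 hp.2).ne'

theorem logit_nonneg {p : ℝ} (hp : p ∈ Ioo 0 1) (h : 1 / 2 ≤ p) : 0 ≤ logit p := by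
  rwa [← sigmoid_le_iff_le_logit hp, sigmoid_zero, ← one_div]

theorem logit_one_sub_le_log_one_div {ε : ℝ} (hε : ε ∈ Ioo 0 1) :
    logit (1 - ε) ≤ log (1 / ε) := by
  obtain ⟨hε0, hε1⟩ := hε
  rw [logit, sub_sub_cancel]
  exact log_le_log (div_pos (sub_pos.2 hε1) hε0) (by gcongr; linarith)

theorem le_sigmoid_gumbel_iff {α τ p u : ℝ} (hτ : 0 < τ) (hp : p ∈ Ioo 0 1) (hu : u ∈ Ioo 0 1) :
    p ≤ Real.sigmoid ((α + log u - log (1 - u)) / τ) ↔ Real.sigmoid (τ * logit p - α) ≤ u := by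
  rw [add_sub_assoc, ← logit_eq_log_sub_log hu, le_sigmoid_iff_logit_le hp, le_div_iff₀ hτ,
    sigmoid_le_iff_le_logit hu]
  constructor <;> intro h <;> linarith

theorem setOf_le_sigmoid_gumbel_inter_Ioo {α τ p : ℝ} (hτ : 0 < τ) (hp : p ∈ Ioo 0 1) :
    {u : ℝ | p ≤ Real.sigmoid ((α + log u - log (1 - u)) / τ)} ∩ Ioo 0 1 =
      Ico (Real.sigmoid (τ * logit p - α)) 1 := by
  ext u
  simp only [mem_inter_iff, mem_ofPred_eq, mem_Ico]
  constructor
  · rintro ⟨h, hu⟩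
    exact ⟨(le_sigmoid_gumbel_iff hτ hp hu).1 h, hu.2⟩
  · rintro ⟨h, hu1⟩
    have hu : u ∈ Ioo 0 1 := ⟨(sigmoid_pos _).trans_le h, hu1⟩
    exact ⟨(le_sigmoid_gumbel_iff hτ hp hu).2 h, hu⟩

theorem volume_restrict_Ioo_setOf_le_sigmoid_gumbel {α τ p : ℝ} (hτ : 0 < τ)
    (hp : p ∈ Ioo 0 1) :
    volume.restrict (Ioo 0 1) {u : ℝ | p ≤ Real.sigmoid ((α + log u - log (1 - u)) / τ)} =
      ENNReal.ofReal (Real.sigmoid (α - τ * logit p)) := by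
  rw [Measure.restrict_apply' measurableSet_Ioo, setOf_le_sigmoid_gumbel_inter_Ioo hτ hp,
    Real.volume_Ico, ← Real.sigmoid_neg, neg_sub]

/-- For U uniform on (0,1) and G(α,τ) = σ((α + log U − log(1−U))/τ),
    for every ε ∈ (0,1/2), σ(α) − (τ/4)·log(1/ε) ≤ P(G(α,τ) ≥ 1−ε) ≤ σ(α). -/
theorem gumbel_upper_tail_bounds (α τ ε : ℝ) (hτ : 0 < τ)
    (hε : ε ∈ Set.Ioo (0:ℝ) (1/2)) :
    ENNReal.ofReal (_root_.sigmoid α - τ / 4 * Real.log (1/ε)) ≤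
      (volume.restrict (Set.Ioo (0:ℝ) 1))
        {u : ℝ | 1 - ε ≤ _root_.sigmoid ((α + Real.log u - Real.log (1 - u)) / τ)} ∧
    (volume.restrict (Set.Ioo (0:ℝ) 1))
        {u : ℝ | 1 - ε ≤ _root_.sigmoid ((α + Real.log u - Real.log (1 - u)) / τ)}
      ≤ ENNReal.ofReal (_root_.sigmoid α) := by
  obtain ⟨hε0, hε2⟩ := hε
  have hp : 1 - ε ∈ Ioo (0 : ℝ) 1 := ⟨by linarith, by linarith⟩
  rw [sigmoid_eq_real_sigmoid, volume_restrict_Ioo_setOf_le_sigmoid_gumbel hτ hp]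
  set L := logit (1 - ε)
  have hτL : 0 ≤ τ * L := mul_nonneg hτ.le (logit_nonneg hp (by linarith))
  have hL : L ≤ log (1 / ε) := logit_one_sub_le_log_one_div ⟨hε0, by linarith⟩
  refine ⟨ENNReal.ofReal_le_ofReal ?_, ENNReal.ofReal_le_ofReal (sigmoid_le (by linarith))⟩
  calc Real.sigmoid α - τ / 4 * log (1 / ε)
      ≤ Real.sigmoid α - 4⁻¹ * (τ * L) := by linarith [mul_le_mul_of_nonneg_left hL hτ.le]
    _ ≤ Real.sigmoid (α - τ * L) := by
      linarith [Real.sigmoid_sub_sigmoid_le (sub_le_self α hτL)]
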